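/- Second moment of a Hermite polynomial of a shifted Gaussian: For every natural number d, every θ ∈ ℝ, and X distributed as the one-dimensional Gaussian N(θ, 1), one has E[He_d(X)²] = Σ_{k=0}^{d} C(d, k)² · θ^{2(d−k)} · k!, where C(d, k) denotes the binomial coefficient. -/

import Mathlib

/-!
The Hermite polynomials form an Appell sequence: `hasseDeriv k He_n = C(n,k) He_{n-k}`, so Taylor
expansion gives `He_d(x + θ) = ∑ C(d,k) θ^(d-k) He_k(x)`. Writing `X = Z + θ` with `Z ~ N(0,1)`,
the claim becomes Parseval's identity for this expansion, i.e. the orthogonality relation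
`E[He_j(Z) He_k(Z)] = δ_jk j!`. That relation comes from Stein's identity `E[Z f(Z)] = E[f'(Z)]`:
together with `He_{n+1} = X He_n - He_n'` it gives `E[p(Z) He_n(Z)] = E[p^(n)(Z)]`, and
`He_j^(k)` vanishes for `j < k` and equals `k!` for `j = k`.
-/

open MeasureTheory Polynomial ProbabilityTheory
open scoped NNReal

namespace Polynomial

theorem derivative_hermite (n : ℕ) : derivative (hermite n) = n • hermite (n - 1) := by
  induction n with
  | zero => simp
  | succ n ih =>
    cases n with
    | zero => simp
    | succ n =>
      rw [hermite_succ (n + 1), derivative_sub, derivative_mul, derivative_X, one_mul, ih,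
        Nat.add_sub_cancel, derivative_smul, mul_smul_comm, add_sub_assoc, ← smul_sub,
        ← hermite_succ, Nat.add_sub_cancel, succ_nsmul' _ (n + 1)]

theorem iterate_derivative_hermite (n k : ℕ) :
    derivative^[k] (hermite n) = n.descFactorial k • hermite (n - k) := by
  induction k with
  | zero => simp
  | succ k ih =>
    rw [Function.iterate_succ_apply', ih, derivative_smul, derivative_hermite, smul_smul,
      Nat.descFactorial_succ, mul_comm, Nat.sub_sub]

theorem hasseDeriv_hermite (n k : ℕ) :
    hasseDeriv k (hermite n) = n.choose k • hermite (n - k) := by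
  apply smul_right_injective ℤ[X] k.factorial_ne_zero
  dsimp only
  rw [← LinearMap.smul_apply, factorial_smul_hasseDeriv, iterate_derivative_hermite, smul_smul,
    Nat.descFactorial_eq_factorial_mul_choose]

theorem hasseDeriv_map {R S : Type*} [Semiring R] [Semiring S] (f : R →+* S) (k : ℕ)
    (p : R[X]) : hasseDeriv k (p.map f) = (hasseDeriv k p).map f := by
  ext i
  simp [hasseDeriv_coeff, coeff_map]

theorem aeval_add_eq_sum_hasseDeriv {R A : Type*} [CommSemiring R] [CommSemiring A]
    [Algebra R A] (p : R[X]) {n : ℕ} (hp : p.natDegree < n) (x y : A) :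
    aeval (x + y) p = ∑ k ∈ Finset.range n, aeval x (hasseDeriv k p) * y ^ k := by
  rw [aeval_def, eval₂_eq_eval_map, add_comm, ← taylor_eval,
    eval_eq_sum_range' ((natDegree_taylor _ _).trans_lt (natDegree_map_le.trans_lt hp))]
  simp only [taylor_coeff, hasseDeriv_map, aeval_def, eval₂_eq_eval_map]

theorem aeval_add_hermite {A : Type*} [CommRing A] (x y : A) (n : ℕ) :
    aeval (x + y) (hermite n) =
      ∑ k ∈ Finset.range (n + 1), n.choose k * y ^ (n - k) * aeval x (hermite k) := by
  rw [aeval_add_eq_sum_hasseDeriv _ (natDegree_hermite.trans_lt n.lt_succ_self),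
    ← Finset.sum_range_reflect]
  refine Finset.sum_congr rfl fun k hk ↦ ?_
  have hkn : k ≤ n := Nat.lt_succ_iff.mp (Finset.mem_range.mp hk)
  rw [hasseDeriv_hermite, Nat.succ_sub_one, Nat.sub_sub_self hkn, Nat.choose_symm hkn,
    map_nsmul, nsmul_eq_mul]
  ring

end Polynomial

namespace ProbabilityTheory

section Stein

variable {R : Type*} [CommSemiring R] [Algebra R ℝ]

lemma integrable_aeval_gaussianReal (μ : ℝ) (v : ℝ≥0) (q : R[X]) :
    Integrable (fun x ↦ aeval x q) (gaussianReal μ v) := by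
  induction q using Polynomial.induction_on' with
  | add p q hp hq => simp only [map_add]; exact hp.add hq
  | monomial n a =>
    have hpow : Integrable (fun x : ℝ ↦ x ^ n) (gaussianReal μ v) :=
      integrable_pow_of_mem_interior_integrableExpSet (X := id)
        (by simp [integrableExpSet_id_gaussianReal]) n
    simpa [aeval_monomial] using hpow.const_mul (algebraMap R ℝ a)

lemma integrable_gaussianPDFReal_mul_aeval (μ : ℝ) {v : ℝ≥0} (hv : v ≠ 0) (q : R[X]) :
    Integrable (fun x ↦ gaussianPDFReal μ v x * aeval x q) := by
  have h := integrable_aeval_gaussianReal μ v q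
  rw [gaussianReal_of_var_ne_zero _ hv, integrable_withDensity_iff_integrable_smul'
    (measurable_gaussianPDF _ _) (ae_of_all _ fun _ ↦ gaussianPDF_lt_top)] at h
  simpa only [toReal_gaussianPDF, smul_eq_mul] using h

lemma hasDerivAt_gaussianPDFReal (μ : ℝ) (v : ℝ≥0) (x : ℝ) :
    HasDerivAt (gaussianPDFReal μ v) (-((x - μ) / v) * gaussianPDFReal μ v x) x := by
  have h : HasDerivAt (fun y ↦ -(y - μ) ^ 2 / (2 * v)) (-((x - μ) / v)) x :=
    ((((hasDerivAt_id' x).sub_const μ).pow 2).neg.div_const (2 * (v : ℝ))).congr_deriv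
      (by norm_num; ring)
  rw [gaussianPDFReal_def]
  exact (h.exp.const_mul (√(2 * Real.pi * v))⁻¹).congr_deriv (by ring)

/-- Stein's identity, for polynomial test functions. -/
lemma integral_sub_mul_aeval_gaussianReal (μ : ℝ) (v : ℝ≥0) (q : R[X]) :
    ∫ x, (x - μ) * aeval x q ∂gaussianReal μ v =
      v * ∫ x, aeval x (derivative q) ∂gaussianReal μ v := by
  rcases eq_or_ne v 0 with rfl | hv
  · simp [gaussianReal_zero_var]
  have hq := integrable_gaussianPDFReal_mul_aeval μ hv q
  have hparts := integral_mul_deriv_eq_deriv_mul_of_integrable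
    (fun (x : ℝ) _ ↦ Polynomial.hasDerivAt_aeval q x)
    (fun x _ ↦ hasDerivAt_gaussianPDFReal μ v x)
    ((((integrable_gaussianPDFReal_mul_aeval μ hv (X * q)).sub (hq.const_mul μ)).const_mul
      (-(v : ℝ)⁻¹)).congr (ae_of_all _ fun x ↦ by
        simp only [Pi.mul_apply, Pi.sub_apply, map_mul, aeval_X]; ring))
    ((integrable_gaussianPDFReal_mul_aeval μ hv (derivative q)).congr
      (ae_of_all _ fun x ↦ mul_comm _ _))
    (hq.congr (ae_of_all _ fun x ↦ mul_comm _ _))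
  have hlhs : ∫ x, aeval x q * (-((x - μ) / v) * gaussianPDFReal μ v x) =
      -(v : ℝ)⁻¹ * ∫ x, gaussianPDFReal μ v x * ((x - μ) * aeval x q) := by
    rw [← integral_const_mul]
    congr 1 with x
    ring
  simp only [integral_gaussianReal_eq_integral_smul hv, smul_eq_mul]
  rw [hlhs] at hparts
  simp_rw [mul_comm (aeval _ (derivative q))] at hparts
  field_simp at hparts ⊢
  linarith

end Stein

lemma integral_aeval_mul_hermite_succ (p : ℤ[X]) (n : ℕ) :
    ∫ x, aeval x (p * hermite (n + 1)) ∂gaussianReal 0 1 =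
      ∫ x, aeval x (derivative p * hermite n) ∂gaussianReal 0 1 := by
  have hint := integrable_aeval_gaussianReal (0 : ℝ) 1 (R := ℤ)
  have hstein : ∫ x, aeval x (X * (p * hermite n)) ∂gaussianReal 0 1 =
      ∫ x, aeval x (derivative (p * hermite n)) ∂gaussianReal 0 1 := by
    simpa only [sub_zero, NNReal.coe_one, one_mul, map_mul _ X, aeval_X] using
      integral_sub_mul_aeval_gaussianReal 0 1 (p * hermite n)
  rw [hermite_succ, show p * (X * hermite n - derivative (hermite n)) =
      X * (p * hermite n) - p * derivative (hermite n) by ring,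
    show derivative p * hermite n = derivative (p * hermite n) - p * derivative (hermite n) by
      rw [derivative_mul]; ring]
  simp only [map_sub]
  rw [integral_sub (hint _) (hint _), integral_sub (hint _) (hint _), hstein]

lemma integral_aeval_mul_hermite (p : ℤ[X]) (n : ℕ) :
    ∫ x, aeval x (p * hermite n) ∂gaussianReal 0 1 =
      ∫ x, aeval x (derivative^[n] p) ∂gaussianReal 0 1 := by
  induction n generalizing p with
  | zero => simp
  | succ n ih => rw [integral_aeval_mul_hermite_succ, ih, Function.iterate_succ_apply]

lemma integral_aeval_hermite_mul_hermite (j k : ℕ) :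
    ∫ x, aeval x (hermite j * hermite k) ∂gaussianReal 0 1 =
      if j = k then (j.factorial : ℝ) else 0 := by
  wlog hjk : j ≤ k generalizing j k
  · rw [mul_comm, this k j (le_of_not_ge hjk)]
    simp only [eq_comm]
    split_ifs with h <;> simp [h]
  rw [integral_aeval_mul_hermite, iterate_derivative_hermite]
  rcases hjk.eq_or_lt with rfl | hlt
  · simp [Nat.descFactorial_self]
  · simp [Nat.descFactorial_eq_zero_iff_lt.mpr hlt, hlt.ne]

lemma integral_sum_hermite_sq (c : ℕ → ℝ) (n : ℕ) :
    ∫ x, (∑ k ∈ Finset.range n, c k * aeval x (hermite k)) ^ 2 ∂gaussianReal 0 1 =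
      ∑ k ∈ Finset.range n, c k ^ 2 * k.factorial := by
  have hexpand : ∀ x : ℝ, (∑ k ∈ Finset.range n, c k * aeval x (hermite k)) ^ 2 =
      ∑ j ∈ Finset.range n, ∑ k ∈ Finset.range n,
        c j * c k * aeval x (hermite j * hermite k) := by
    intro x
    simp only [sq, Finset.sum_mul_sum, map_mul]
    refine Finset.sum_congr rfl fun j _ ↦ Finset.sum_congr rfl fun k _ ↦ ?_
    ring
  have hint : ∀ j k, Integrable (fun x ↦ c j * c k * aeval x (hermite j * hermite k))
      (gaussianReal 0 1) := fun j k ↦ (integrable_aeval_gaussianReal 0 1 _).const_mul _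
  simp_rw [hexpand]
  rw [integral_finsetSum _ fun j _ ↦ integrable_finsetSum _ fun k _ ↦ hint j k]
  refine Finset.sum_congr rfl fun j hj ↦ ?_
  rw [integral_finsetSum _ fun k _ ↦ hint j k]
  simp_rw [integral_const_mul, integral_aeval_hermite_mul_hermite, mul_ite, mul_zero,
    Finset.sum_ite_eq, if_pos hj, sq]

end ProbabilityTheory

theorem stmt_6 (d : ℕ) (θ : ℝ) :
    (∫ x, (Polynomial.aeval x (Polynomial.hermite d) : ℝ) ^ 2
        ∂(ProbabilityTheory.gaussianReal θ 1)) =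
      ∑ k ∈ Finset.range (d + 1),
        (d.choose k : ℝ) ^ 2 * θ ^ (2 * (d - k)) * (k.factorial : ℝ) := by
  have hshift : gaussianReal θ 1 = (gaussianReal 0 1).map (· + θ) := by
    rw [gaussianReal_map_add_const, zero_add]
  rw [hshift, integral_map (by fun_prop) (by fun_prop)]
  simp_rw [aeval_add_hermite]
  rw [integral_sum_hermite_sq (fun k ↦ (d.choose k : ℝ) * θ ^ (d - k))]
  refine Finset.sum_congr rfl fun k _ ↦ ?_
  ring
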